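/- arXiv:2307.10238 — 3 statements merged into one kernel-verified Lean document; each statement's English description precedes it below -/
import Mathlib

section
/- Let δ_0 be an element of a field K of characteristic ≠ 2 and define δ_i = δ_0·((δ_0-1)/2)^i for i ≥ 1. Then for every odd k ≥ 1, 2δ_k = -δ_{k-1} + Σ_{j=1}^{k} (-1)^{j-1} δ_{j-1} δ_{k-j}. -/
/-- Admissibility recursion: for `δᵢ = δ₀ ((δ₀-1)/2)ᵢ` (for `i ≥ 1`) in a field of
characteristic `≠ 2`, for every odd `k ≥ 1` one has
`2 δ_k = -δ_{k-1} + Σ_{j=1}^{k} (-1)^{j-1} δ_{j-1} δ_{k-j}`. -/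
theorem stmt_2 (K : Type*) [Field K] (h2 : (2 : K) ≠ 0) (δ : ℕ → K)
    (hδ : ∀ i : ℕ, 1 ≤ i → δ i = δ 0 * ((δ 0 - 1) / 2) ^ i)
    (k : ℕ) (hodd : Odd k) (hk : 1 ≤ k) :
    2 * δ k = -δ (k - 1) + ∑ j ∈ Finset.Icc 1 k, (-1 : K) ^ (j - 1) * δ (j - 1) * δ (k - j) := by
  set c : K := (δ 0 - 1) / 2 with hc
  have hall : ∀ i : ℕ, δ i = δ 0 * c ^ i := by
    intro i
    rcases Nat.eq_zero_or_pos i with h | h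
    · simp [h]
    · exact hδ i h
  have hsum : ∑ j ∈ Finset.Icc 1 k, (-1 : K) ^ (j - 1) * δ (j - 1) * δ (k - j)
      = δ 0 ^ 2 * c ^ (k - 1) * ∑ i ∈ Finset.range k, (-1 : K) ^ i := by
    rw [Finset.mul_sum, show Finset.Icc 1 k = Finset.Ico 1 (k+1) by rfl,
      Finset.sum_Ico_eq_sum_range]
    simp only [Nat.add_sub_cancel]
    apply Finset.sum_congr rfl
    intro i hi
    have hik : i < k := by
      simpa using Finset.mem_range.mp (by simpa using hi)
    have h1 : (1 + i) - 1 = i := by omega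
    have h2' : k - (1 + i) = k - 1 - i := by omega
    have h3 : i + (k - 1 - i) = k - 1 := by omega
    rw [h1, h2', hall i, hall (k - 1 - i)]
    rw [show δ 0 ^ 2 * c ^ (k - 1) = δ 0 * (δ 0 * (c ^ i * c ^ (k - 1 - i))) by
      rw [← pow_add, h3]; ring]
    ring
  rw [hsum, neg_one_geom_sum, if_neg (Nat.not_even_iff_odd.mpr hodd), mul_one,
    hall k, hall (k - 1), show k = 1 + (k - 1) by omega, pow_add, pow_one]
  have : (1 : ℕ) + (k - 1) - 1 = k - 1 := by omega
  rw [this]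
  field_simp [hc]
  have h2c : c * 2 = δ 0 - 1 := by rw [hc]; exact div_mul_cancel₀ _ h2
  linear_combination (δ 0 * c ^ (k - 1)) * h2c
end

section
/- Let 𝔹 be the Young graph on all partitions, with edges λ—μ whenever μ is obtained from λ by adding or removing one box. Fix δ_0 ∈ K and color each edge adding a box x by c_{δ_0}(x) = (δ_0-1)/2 + c(x) and each edge removing a box x by -c_{δ_0}(x). If δ_0 ∉ ℤ·1_K and there exist two paths γ: ∅ ⇝ λ and δ': ∅ ⇝ μ of the same length m with equal content sequences, where μ is a partition of m (so δ' uses only box-additions), then λ is also a partition of m (γ also uses only box-additions). -/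
/-- A path of length `m` in the Young graph starting at `∅`, where the edge at step `k`
either adds a box `x` (colored `c_{δ₀}(x) = (δ₀-1)/2 + (j-i)`) or removes a box `x`
(colored `-c_{δ₀}(x)`), and `c : Fin m → K` records the sequence of colors (the content
of the path). -/
def IsColoredPath (K : Type*) [Field K] (δ0 : K) {m : ℕ}
    (P : Fin (m + 1) → YoungDiagram) (c : Fin m → K) : Prop :=
  P 0 = ⊥ ∧ ∀ k : Fin m,
    (∃ x : ℕ × ℕ, x ∉ P k.castSucc ∧ (P k.succ).cells = insert x (P k.castSucc).cells ∧
      c k = (δ0 - 1) / 2 + (((x.2 : ℤ) - (x.1 : ℤ) : ℤ) : K)) ∨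
    (∃ x : ℕ × ℕ, x ∈ P k.castSucc ∧ (P k.succ).cells = (P k.castSucc).cells.erase x ∧
      c k = -((δ0 - 1) / 2 + (((x.2 : ℤ) - (x.1 : ℤ) : ℤ) : K)))

lemma colored_step_card {K : Type*} [Field K] {δ0 : K} {m : ℕ}
    {P : Fin (m + 1) → YoungDiagram} {c : Fin m → K}
    (h : IsColoredPath K δ0 P c) (k : Fin m) :
    ((P k.succ).cells.card = (P k.castSucc).cells.card + 1) ∨
    (1 ≤ (P k.castSucc).cells.card ∧
      (P k.succ).cells.card = (P k.castSucc).cells.card - 1) := by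
  rcases h.2 k with ⟨x, hx, hc, -⟩ | ⟨x, hx, hc, -⟩
  · left
    rw [hc, Finset.card_insert_of_notMem (by simpa [YoungDiagram.mem_cells] using hx)]
  · right
    have hx' : x ∈ (P k.castSucc).cells := by simpa [YoungDiagram.mem_cells] using hx
    exact ⟨Finset.card_pos.mpr ⟨x, hx'⟩, by rw [hc, Finset.card_erase_of_mem hx']⟩

/-- If `δ₀ ∉ ℤ·1_K` and there are two colored paths `γ : ∅ ⇝ λ` and `δ' : ∅ ⇝ μ` of the
same length `m` with equal content sequences, where `μ` is a partition of `m` (so the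
path to `μ` consists only of box additions), then `λ` is also a partition of `m`. -/
theorem stmt_7 (K : Type*) [Field K] (h2 : (2 : K) ≠ 0) (δ0 : K)
    (hδ0 : ∀ n : ℤ, δ0 ≠ (n : K)) (m : ℕ) (lam mu : YoungDiagram)
    (γ δ' : Fin (m + 1) → YoungDiagram) (c : Fin m → K)
    (hγ : IsColoredPath K δ0 γ c) (hγend : γ (Fin.last m) = lam)
    (hδ' : IsColoredPath K δ0 δ' c) (hδend : δ' (Fin.last m) = mu)
    (hmu : mu.cells.card = m) :
    lam.cells.card = m := by
  -- upper bound on card along the δ' path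
  have upper : ∀ n : ℕ, ∀ hn : n ≤ m,
      (δ' ⟨n, Nat.lt_succ_of_le hn⟩).cells.card ≤ n := by
    intro n
    induction n with
    | zero => intro hn; simp [show (⟨0, Nat.lt_succ_of_le hn⟩ : Fin (m+1)) = 0 from rfl, hδ'.1]
    | succ n ih =>
      intro hn
      have hn' : n < m := hn
      have := colored_step_card hδ' ⟨n, hn'⟩
      have h1 : (⟨n, hn'⟩ : Fin m).castSucc = ⟨n, Nat.lt_succ_of_le hn'.le⟩ := rfl
      have h2 : (⟨n, hn'⟩ : Fin m).succ = ⟨n + 1, Nat.lt_succ_of_le hn⟩ := rfl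
      rw [h1, h2] at this
      have := ih hn'.le
      omega
  -- lower bound along the δ' path
  have lower : ∀ j : ℕ, j ≤ m →
      m ≤ (δ' ⟨m - j, Nat.lt_succ_of_le (Nat.sub_le m j)⟩).cells.card + j := by
    intro j
    induction j with
    | zero =>
      intro _
      have : (⟨m - 0, Nat.lt_succ_of_le (Nat.sub_le m 0)⟩ : Fin (m+1)) = Fin.last m := by
        ext; simp
      rw [this, hδend, hmu]
      omega
    | succ j ih =>
      intro hj
      have hjm : j ≤ m := le_of_lt hj
      have hlt : m - (j + 1) < m := by omega
      have := colored_step_card hδ' ⟨m - (j + 1), hlt⟩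
      have h1 : (⟨m - (j+1), hlt⟩ : Fin m).castSucc
          = ⟨m - (j+1), Nat.lt_succ_of_le (Nat.sub_le m (j+1))⟩ := rfl
      have h2 : (⟨m - (j+1), hlt⟩ : Fin m).succ
          = ⟨m - j, Nat.lt_succ_of_le (Nat.sub_le m j)⟩ := by
        ext; simp; omega
      rw [h1, h2] at this
      have := ih hjm
      omega
  have hδcard : ∀ n : ℕ, ∀ hn : n ≤ m,
      (δ' ⟨n, Nat.lt_succ_of_le hn⟩).cells.card = n := by
    intro n hn
    have h1 := upper n hn
    have h2 := lower (m - n) (Nat.sub_le m n)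
    have he : (⟨m - (m - n), Nat.lt_succ_of_le (Nat.sub_le m (m - n))⟩ : Fin (m+1))
        = ⟨n, Nat.lt_succ_of_le hn⟩ := by ext; simp; omega
    rw [he] at h2
    omega
  -- every step of δ' is an addition, so every color is of addition type
  have hcol : ∀ k : Fin m, ∃ a : ℤ, c k = (δ0 - 1) / 2 + (a : K) := by
    intro k
    rcases hδ'.2 k with ⟨x, -, -, hc⟩ | ⟨x, hx, hcells, -⟩
    · exact ⟨(x.2 : ℤ) - (x.1 : ℤ), hc⟩
    · exfalso
      have hx' : x ∈ (δ' k.castSucc).cells := by simpa [YoungDiagram.mem_cells] using hx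
      have e1 : (δ' k.succ).cells.card = (δ' k.castSucc).cells.card - 1 := by
        rw [hcells, Finset.card_erase_of_mem hx']
      have c1 : (δ' k.castSucc).cells.card = (k : ℕ) := by
        have := hδcard k (le_of_lt k.isLt)
        convert this using 3
        rfl
      have c2 : (δ' k.succ).cells.card = (k : ℕ) + 1 := by
        have := hδcard ((k : ℕ) + 1) k.isLt
        convert this using 3
        rfl
      have hpos : 1 ≤ (δ' k.castSucc).cells.card := Finset.card_pos.mpr ⟨x, hx'⟩
      omega
  -- hence every step of γ is an addition
  have hγadd : ∀ k : Fin m,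
      (γ k.succ).cells.card = (γ k.castSucc).cells.card + 1 := by
    intro k
    rcases hγ.2 k with ⟨x, hx, hcells, -⟩ | ⟨x, -, -, hc⟩
    · rw [hcells, Finset.card_insert_of_notMem (by simpa [YoungDiagram.mem_cells] using hx)]
    · exfalso
      obtain ⟨a, ha⟩ := hcol k
      rw [ha] at hc
      set b : ℤ := (x.2 : ℤ) - (x.1 : ℤ) with hb
      refine hδ0 (1 - a - b) ?_
      have hc2 := hc
      field_simp at hc2
      push_cast
      refine mul_left_cancel₀ h2 ?_
      linear_combination hc2
  -- card along γ
  have hγcard : ∀ n : ℕ, ∀ hn : n ≤ m,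
      (γ ⟨n, Nat.lt_succ_of_le hn⟩).cells.card = n := by
    intro n
    induction n with
    | zero => intro hn; simp [show (⟨0, Nat.lt_succ_of_le hn⟩ : Fin (m+1)) = 0 from rfl, hγ.1]
    | succ n ih =>
      intro hn
      have hn' : n < m := hn
      have := hγadd ⟨n, hn'⟩
      have h1 : (⟨n, hn'⟩ : Fin m).castSucc = ⟨n, Nat.lt_succ_of_le hn'.le⟩ := rfl
      have h2 : (⟨n, hn'⟩ : Fin m).succ = ⟨n + 1, Nat.lt_succ_of_le hn⟩ := rfl
      rw [h1, h2] at this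
      rw [this, ih hn'.le]
  have := hγcard m le_rfl
  rw [show (⟨m, Nat.lt_succ_of_le le_rfl⟩ : Fin (m+1)) = Fin.last m from rfl, hγend] at this
  exact this
end

section
/- Let K be a field of characteristic 0 and δ_0 ∈ K with δ_0 ∉ ℤ·1_K = ℤ. Then for every m ≥ 1, no two distinct partitions λ, μ with |λ|, |μ| ≤ m and |λ| ≡ |μ| (mod 2) satisfy: the multiset {c_{δ_0}(x) : x ∈ λ} arises as the content sequence of a path from ∅ to μ in the colored Young graph. In particular, λ = μ whenever paths ∅⇝λ and ∅⇝μ of equal length m = |μ| have equal content sequences with λ, μ both partitions of m. -/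
namespace Stmt15Aux

lemma downclosed_mem_iff (S : Finset ℕ) (hS : ∀ s t : ℕ, s ≤ t → t ∈ S → s ∈ S) (t : ℕ) :
    t ∈ S ↔ t < S.card := by
  constructor
  · intro ht
    have hsub : Finset.range (t + 1) ⊆ S := by
      intro s hs
      rw [Finset.mem_range] at hs
      exact hS s t (by omega) ht
    have h2 := Finset.card_le_card hsub
    simp only [Finset.card_range] at h2
    omega
  · intro ht
    by_contra h
    have hsub : S ⊆ Finset.range t := by
      intro s hs
      rw [Finset.mem_range]
      by_contra hst
      exact h (hS t s (by omega) hs)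
    have h2 := Finset.card_le_card hsub
    simp only [Finset.card_range] at h2
    omega

lemma mem_iff_min_lt (μ : YoungDiagram) (i j : ℕ) :
    (i, j) ∈ μ ↔ min i j < (μ.cells.filter
      (fun y : ℕ × ℕ => (j : ℤ) - (i : ℤ) = (y.2 : ℤ) - (y.1 : ℤ))).card := by
  set k : ℤ := (j : ℤ) - (i : ℤ) with hk
  set g : ℕ → ℕ × ℕ := fun t => (t + (-k).toNat, t + k.toNat) with hgdef
  set D := μ.cells.filter (fun y : ℕ × ℕ => k = (y.2 : ℤ) - (y.1 : ℤ)) with hD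
  set S : Finset ℕ := D.image (fun y => min y.1 y.2) with hS
  have hgy : ∀ y : ℕ × ℕ, k = (y.2 : ℤ) - (y.1 : ℤ) → y = g (min y.1 y.2) := by
    intro y hy
    have h1 : y.1 = min y.1 y.2 + (-k).toNat := by omega
    have h2 : y.2 = min y.1 y.2 + k.toNat := by omega
    exact Prod.ext h1 h2
  have hgmem : ∀ t, g t ∈ μ ↔ t ∈ S := by
    intro t
    constructor
    · intro h
      refine Finset.mem_image.2 ⟨g t, ?_, ?_⟩
      · refine Finset.mem_filter.2 ⟨(YoungDiagram.mem_cells _).2 h, ?_⟩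
        simp only [hgdef]
        omega
      · simp only [hgdef]
        omega
    · intro h
      obtain ⟨y, hy, hty⟩ := Finset.mem_image.1 h
      obtain ⟨hy1, hy2⟩ := Finset.mem_filter.1 hy
      rw [← hty, ← hgy y hy2]
      exact (YoungDiagram.mem_cells _).1 hy1
  have hSd : ∀ s t : ℕ, s ≤ t → t ∈ S → s ∈ S := by
    intro s t hst ht
    rw [← hgmem] at ht ⊢
    exact μ.up_left_mem (show s + (-k).toNat ≤ t + (-k).toNat by omega)
      (show s + k.toNat ≤ t + k.toNat by omega) ht
  have hcard : S.card = D.card := by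
    rw [hS]
    apply Finset.card_image_of_injOn
    intro y hy z hz hyz
    have hyz' : min y.1 y.2 = min z.1 z.2 := hyz
    rw [hgy y (Finset.mem_filter.1 (Finset.mem_coe.1 hy)).2,
      hgy z (Finset.mem_filter.1 (Finset.mem_coe.1 hz)).2, hyz']
  have hij : (i, j) = g (min i j) := hgy (i, j) rfl
  rw [hij, hgmem, downclosed_mem_iff S hSd, hcard]

end Stmt15Aux


/-- Char 0, `δ₀ ∉ ℤ`: if the multiset of contents `{c_{δ₀}(x) : x ∈ λ}` of a partition
`λ` arises as the (multiset of the) content sequence of a colored path from `∅` to `μ`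
of length `|λ|`, then `λ = μ`.  In particular two partitions of `m` joined to `∅` by
paths of length `m` with equal content sequences coincide. -/
theorem stmt_15 (K : Type*) [Field K] [CharZero K] (δ0 : K)
    (hδ0 : ∀ n : ℤ, δ0 ≠ (n : K)) (lam mu : YoungDiagram)
    (P : Fin (lam.cells.card + 1) → YoungDiagram) (c : Fin lam.cells.card → K)
    (hP : IsColoredPath K δ0 P c) (hend : P (Fin.last lam.cells.card) = mu)
    (hmult : Multiset.map c (Finset.univ : Finset (Fin lam.cells.card)).val
        = Multiset.map (fun x : ℕ × ℕ => (δ0 - 1) / 2 + (((x.2 : ℤ) - (x.1 : ℤ) : ℤ) : K))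
            lam.cells.val) :
    lam = mu := by
  obtain ⟨h0, hstep⟩ := hP
  set f : ℕ × ℕ → K := fun x => (δ0 - 1) / 2 + (((x.2 : ℤ) - (x.1 : ℤ) : ℤ) : K) with hf
  -- every color is of "addition" form
  have hck : ∀ k : Fin lam.cells.card, ∃ n : ℤ, c k = (δ0 - 1) / 2 + (n : K) := by
    intro k
    have hmem : c k ∈ Multiset.map c (Finset.univ : Finset (Fin lam.cells.card)).val :=
      Multiset.mem_map.2 ⟨k, by simp, rfl⟩
    rw [hmult] at hmem
    obtain ⟨x, _, hx⟩ := Multiset.mem_map.1 hmem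
    exact ⟨_, hx.symm⟩
  -- all steps are additions
  have hadd : ∀ k : Fin lam.cells.card, ∃ x : ℕ × ℕ, x ∉ P k.castSucc ∧
      (P k.succ).cells = insert x (P k.castSucc).cells ∧ c k = f x := by
    intro k
    rcases hstep k with h | ⟨x, _, _, hx⟩
    · exact h
    · exfalso
      obtain ⟨n, hn⟩ := hck k
      rw [hx] at hn
      apply hδ0 (1 - ((x.2 : ℤ) - (x.1 : ℤ)) - n)
      push_cast at hn ⊢
      linear_combination -hn
  -- key induction: contents accumulated along the path
  have key : ∀ k : ℕ, (hk : k ≤ lam.cells.card) →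
      Multiset.map f (P ⟨k, Nat.lt_succ_of_le hk⟩).cells.val
        = Multiset.map c (Finset.univ.filter (fun t : Fin lam.cells.card => (t : ℕ) < k)).val := by
    intro k
    induction k with
    | zero =>
      intro _
      have : (⟨0, Nat.lt_succ_of_le (Nat.zero_le lam.cells.card)⟩ : Fin (lam.cells.card + 1)) = 0 := rfl
      rw [this, h0]
      have : (Finset.univ.filter (fun t : Fin lam.cells.card => (t : ℕ) < 0)) = ∅ := by
        ext t; simp
      rw [this]
      simp [YoungDiagram.cells_bot]
    | succ k ih =>
      intro hk
      obtain ⟨x, hx1, hx2, hx3⟩ := hadd ⟨k, hk⟩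
      have hcs : (⟨k, hk⟩ : Fin lam.cells.card).castSucc
          = (⟨k, Nat.lt_succ_of_le (Nat.le_of_succ_le hk)⟩ : Fin (lam.cells.card + 1)) := rfl
      have hsc : (⟨k, hk⟩ : Fin lam.cells.card).succ
          = (⟨k + 1, Nat.lt_succ_of_le hk⟩ : Fin (lam.cells.card + 1)) := rfl
      rw [hcs] at hx1 hx2
      rw [hsc] at hx2
      have hxnot : x ∉ (P ⟨k, Nat.lt_succ_of_le (Nat.le_of_succ_le hk)⟩).cells := by
        intro h; exact hx1 ((YoungDiagram.mem_cells _).1 h)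
      rw [hx2, Finset.insert_val_of_notMem hxnot, Multiset.map_cons,
        ih (Nat.le_of_succ_le hk)]
      have hfil : (Finset.univ.filter (fun t : Fin lam.cells.card => (t : ℕ) < k + 1))
          = insert (⟨k, hk⟩ : Fin lam.cells.card) (Finset.univ.filter (fun t : Fin lam.cells.card => (t : ℕ) < k)) := by
        ext t
        simp only [Finset.mem_filter, Finset.mem_univ, true_and, Finset.mem_insert,
          Fin.ext_iff]
        omega
      have hknot : (⟨k, hk⟩ : Fin lam.cells.card) ∉ Finset.univ.filter (fun t : Fin lam.cells.card => (t : ℕ) < k) := by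
        simp
      rw [hfil, Finset.insert_val_of_notMem hknot, Multiset.map_cons, hx3]
  -- conclude: contents of mu = contents of lam (over K)
  have hlast := key lam.cells.card le_rfl
  have hlastP : (⟨lam.cells.card, Nat.lt_succ_of_le le_rfl⟩ : Fin (lam.cells.card + 1)) = Fin.last lam.cells.card := rfl
  rw [hlastP, hend] at hlast
  have hfiluniv : (Finset.univ.filter (fun t : Fin lam.cells.card => (t : ℕ) < lam.cells.card)) = Finset.univ := by
    ext t; simpa using t.isLt
  rw [hfiluniv, hmult] at hlast
  -- pass to integer contents
  have hinj : Function.Injective (fun n : ℤ => (δ0 - 1) / 2 + (n : K)) := by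
    intro a b hab
    exact_mod_cast add_left_cancel hab
  have hcomp : f = (fun n : ℤ => (δ0 - 1) / 2 + (n : K)) ∘
      (fun y : ℕ × ℕ => (y.2 : ℤ) - (y.1 : ℤ)) := rfl
  have hcont : Multiset.map (fun y : ℕ × ℕ => (y.2 : ℤ) - (y.1 : ℤ)) mu.cells.val
      = Multiset.map (fun y : ℕ × ℕ => (y.2 : ℤ) - (y.1 : ℤ)) lam.cells.val := by
    apply Multiset.map_injective hinj
    rw [Multiset.map_map, Multiset.map_map, ← hcomp]
    exact hlast
  -- counts on each diagonal agree
  have hcount : ∀ k : ℤ,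
      (mu.cells.filter (fun y : ℕ × ℕ => k = (y.2 : ℤ) - (y.1 : ℤ))).card
        = (lam.cells.filter (fun y : ℕ × ℕ => k = (y.2 : ℤ) - (y.1 : ℤ))).card := by
    intro k
    have h1 := congrArg (Multiset.count k) hcont
    rw [Multiset.count_map, Multiset.count_map] at h1
    simp only [Finset.card, Finset.filter_val]
    exact h1.symm ▸ rfl
  -- finish by extensionality
  ext ⟨i, j⟩
  rw [YoungDiagram.mem_cells, YoungDiagram.mem_cells,
    Stmt15Aux.mem_iff_min_lt lam i j, Stmt15Aux.mem_iff_min_lt mu i j, hcount]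
end
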